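/- Let η̄, F̄, h be continuous and K-Lipschitz in the spatial variables (|η̄(t,x)−η̄(t,x')| ≤ K|x−x'|, |h(x)−h(x')| ≤ K|x−x'|, |F̄(t,x,y)−F̄(t,x',y')| ≤ K(|x−x'|+|y−y'|)), and let γ_K > 0 be a constant, depending only on K, such that the forward–backward system with data (η̄, F̄, h) has a unique continuous solution on every interval [τ,T] with T−τ ≤ γ_K from every initial point. Suppose ỹ₁, ỹ₂ : [τ,T]×ℝⁿ → ℝⁿ are continuously differentiable in (t,x) with bounded spatial derivatives, and both satisfy the backward inviscid equation ỹ(t,x) = h(x) + ∫_t^T [−((η̄(s,x)+ỹ(s,x)),∇)ỹ(s,x) + F̄(s,x,ỹ(s,x))] ds on [τ,T]×ℝⁿ, where T−τ ≤ γ_K. Then ỹ₁ = ỹ₂ on [τ,T]×ℝⁿ. -/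

import Mathlib

/-!
Fix `(t, x)` and let `(X, Y)` solve the forward–backward system on `[t, T]` from `x`. For a
`C¹` solution `y` of the backward inviscid equation with `‖∇y‖ ≤ M`, the chain rule shows
that `z s = Y s - y(s, X s)` satisfies `‖z'‖ ≤ (K + M) ‖z‖`, and `z T = h(X T) - h(X T) = 0`.
By Grönwall's inequality run backwards in time, `z ≡ 0`; in particular `y(t, x) = Y t`, a
value which does not depend on `y`.
-/

open Set MeasureTheory intervalIntegral

noncomputable def dirDeriv {n : ℕ} (f : (Fin n → ℝ) → Fin n → ℝ) (x u : Fin n → ℝ) :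
    Fin n → ℝ :=
  fderiv ℝ f x u

noncomputable def lap {n : ℕ} (f : (Fin n → ℝ) → Fin n → ℝ) (x : Fin n → ℝ) : Fin n → ℝ :=
  ∑ j : Fin n, fderiv ℝ (fun z => fderiv ℝ f z (Pi.single j 1)) x (Pi.single j 1)
/-- The deterministic, inviscid forward–backward system on `[τ,T]` with data
`(η̄, F̄, h)` and initial point `x`. -/
def FBSol {n : ℕ} (T τ : ℝ) (ηb : ℝ → (Fin n → ℝ) → Fin n → ℝ)
    (Fb : ℝ → (Fin n → ℝ) → (Fin n → ℝ) → Fin n → ℝ)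
    (h : (Fin n → ℝ) → Fin n → ℝ) (x : Fin n → ℝ)
    (X Y : ℝ → Fin n → ℝ) : Prop :=
  ContinuousOn X (Icc τ T) ∧ ContinuousOn Y (Icc τ T) ∧
  (∀ t ∈ Icc τ T, X t = x - ∫ s in τ..t, (ηb s (X s) + Y s)) ∧
  (∀ t ∈ Icc τ T, Y t = h (X T) + ∫ s in t..T, Fb s (X s) (Y s))

/-- The class `C^{1,1}` on `[a,b]×ℝⁿ`: continuously differentiable in `(t,x)`. -/
def C11On {n : ℕ} (a b : ℝ) (y : ℝ → (Fin n → ℝ) → Fin n → ℝ) : Prop :=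
  ContinuousOn (fun p : ℝ × (Fin n → ℝ) => y p.1 p.2)
    (Icc a b ×ˢ (univ : Set (Fin n → ℝ))) ∧
  (∀ t ∈ Icc a b, Differentiable ℝ (y t)) ∧
  (∀ x : Fin n → ℝ, ∀ t ∈ Icc a b,
    DifferentiableWithinAt ℝ (fun s => y s x) (Icc a b) t) ∧
  ContinuousOn (fun p : ℝ × (Fin n → ℝ) =>
      derivWithin (fun s => y s p.2) (Icc a b) p.1)
    (Icc a b ×ˢ (univ : Set (Fin n → ℝ))) ∧
  ContinuousOn (fun p : ℝ × (Fin n → ℝ) => fderiv ℝ (y p.1) p.2)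
    (Icc a b ×ˢ (univ : Set (Fin n → ℝ)))

open Topology Asymptotics

section Calculus

variable {E : Type*} [NormedAddCommGroup E] [NormedSpace ℝ E]

theorem hasDerivWithinAt_integral_Icc_right [CompleteSpace E] {g : ℝ → E} {a b t : ℝ}
    (hg : ContinuousOn g (Icc a b)) (ht : t ∈ Icc a b) :
    HasDerivWithinAt (fun u => ∫ s in a..u, g s) (g t) (Icc a b) t := by
  have : Fact (t ∈ Icc a b) := ⟨ht⟩
  refine integral_hasDerivWithinAt_right ?_ ?_ (hg.continuousWithinAt ht)
  · exact (hg.mono (uIcc_subset_Icc (left_mem_Icc.2 (ht.1.trans ht.2)) ht)).intervalIntegrable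
  · exact ⟨Icc a b, self_mem_nhdsWithin, hg.aestronglyMeasurable measurableSet_Icc⟩

theorem hasDerivWithinAt_integral_Icc_left [CompleteSpace E] {g : ℝ → E} {a b t : ℝ}
    (hg : ContinuousOn g (Icc a b)) (ht : t ∈ Icc a b) :
    HasDerivWithinAt (fun u => ∫ s in u..b, g s) (-g t) (Icc a b) t := by
  have : Fact (t ∈ Icc a b) := ⟨ht⟩
  refine integral_hasDerivWithinAt_left ?_ ?_ (hg.continuousWithinAt ht)
  · exact (hg.mono (uIcc_subset_Icc ht (right_mem_Icc.2 (ht.1.trans ht.2)))).intervalIntegrable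
  · exact ⟨Icc a b, self_mem_nhdsWithin, hg.aestronglyMeasurable measurableSet_Icc⟩

theorem eq_zero_of_norm_deriv_le_mul_norm_of_eq_zero_at_right {z z' : ℝ → E} {C a b : ℝ}
    (hz : ∀ s ∈ Icc a b, HasDerivWithinAt z (z' s) (Icc a b) s)
    (bound : ∀ s ∈ Icc a b, ‖z' s‖ ≤ C * ‖z s‖) (hb : z b = 0) :
    ∀ s ∈ Icc a b, z s = 0 := by
  have hrev : MapsTo (fun u : ℝ => a + b - u) (Icc a b) (Icc a b) := fun u hu =>
    ⟨by linarith [hu.2], by linarith [hu.1]⟩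
  have hrev' : ∀ u ∈ Icc a b, HasDerivWithinAt (fun u => z (a + b - u))
      (-z' (a + b - u)) (Icc a b) u := fun u hu => by
    simpa [Function.comp_def] using
      (hz _ (hrev hu)).scomp u ((hasDerivWithinAt_id u _).const_sub (a + b)) hrev
  have hw := eq_zero_of_abs_deriv_le_mul_abs_self_of_eq_zero_right (K := C)
    (fun u hu => (hrev' u hu).continuousWithinAt)
    (fun u hu => (hrev' u (Ico_subset_Icc_self hu)).mono_of_mem_nhdsWithin
      (Icc_mem_nhdsGE_of_mem hu))
    (by simpa using hb) (fun u hu => by simpa using bound _ (hrev (Ico_subset_Icc_self hu)))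
  intro s hs
  simpa using hw (a + b - s) (hrev hs)

variable {F : Type*} [NormedAddCommGroup F] [NormedSpace ℝ F]

theorem isLittleO_apply_sub_apply_sub_fderiv {y : ℝ → E → F} {S : Set ℝ} {s₀ : ℝ} {X : ℝ → E}
    (hdiff : ∀ s ∈ S, Differentiable ℝ (y s))
    (hfc : ContinuousWithinAt (fun p : ℝ × E => fderiv ℝ (y p.1) p.2) (S ×ˢ univ) (s₀, X s₀))
    (hX : ContinuousWithinAt X S s₀) :
    (fun s => y s (X s) - y s (X s₀) - fderiv ℝ (y s₀) (X s₀) (X s - X s₀))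
      =o[𝓝[S] s₀] fun s => X s - X s₀ := by
  refine isLittleO_iff.2 fun ε hε => ?_
  obtain ⟨δ, hδ, hfδ⟩ := Metric.continuousWithinAt_iff.1 hfc ε hε
  have hs : ∀ᶠ s in 𝓝[S] s₀, dist s s₀ < δ :=
    Metric.tendsto_nhds.1 continuousWithinAt_id δ hδ
  have hXs : ∀ᶠ s in 𝓝[S] s₀, dist (X s) (X s₀) < δ := Metric.tendsto_nhds.1 hX δ hδ
  filter_upwards [hs, hXs, self_mem_nhdsWithin] with s hs hXs hsS
  refine (convex_ball (X s₀) δ).norm_image_sub_le_of_norm_fderiv_le'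
    (fun z _ => hdiff s hsS z) (fun z hz => ?_) (Metric.mem_ball_self hδ) hXs
  have hclose : dist ((s, z) : ℝ × E) (s₀, X s₀) < δ := by
    rw [Prod.dist_eq]
    exact max_lt hs hz
  rw [← dist_eq_norm]
  exact (hfδ ⟨hsS, mem_univ z⟩ hclose).le

theorem hasDerivWithinAt_apply_of_continuousWithinAt_fderiv {y : ℝ → E → F} {S : Set ℝ}
    {s₀ : ℝ} {X : ℝ → E} {X' : E} {p : F}
    (hdiff : ∀ s ∈ S, Differentiable ℝ (y s))
    (hfc : ContinuousWithinAt (fun p : ℝ × E => fderiv ℝ (y p.1) p.2) (S ×ˢ univ) (s₀, X s₀))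
    (hX : HasDerivWithinAt X X' S s₀) (hp : HasDerivWithinAt (fun s => y s (X s₀)) p S s₀) :
    HasDerivWithinAt (fun s => y s (X s)) (p + fderiv ℝ (y s₀) (X s₀) X') S s₀ := by
  set D := fderiv ℝ (y s₀) (X s₀)
  have hlin : HasDerivWithinAt (fun s => y s (X s₀) + D (X s - X s₀)) (p + D X') S s₀ :=
    hp.add (D.hasFDerivAt.comp_hasDerivWithinAt s₀ (hX.sub_const _))
  have hrem : HasDerivWithinAt (fun s => y s (X s) - y s (X s₀) - D (X s - X s₀)) 0 S s₀ := by
    rw [hasDerivWithinAt_iff_isLittleO]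
    simpa using (isLittleO_apply_sub_apply_sub_fderiv hdiff hfc hX.continuousWithinAt).trans_isBigO
      hX.hasFDerivWithinAt.isBigO_sub
  have hsum := hrem.add hlin
  rw [zero_add] at hsum
  convert hsum using 1
  funext s
  simp only [Pi.add_apply, sub_sub, sub_add_cancel]

end Calculus

/-- The integrand `F̄(s,x,y) - ((η̄ + y),∇) y` of the backward inviscid equation. -/
noncomputable def inviscidRHS {n : ℕ} (ηb : ℝ → (Fin n → ℝ) → Fin n → ℝ)
    (Fb : ℝ → (Fin n → ℝ) → (Fin n → ℝ) → Fin n → ℝ) (y : ℝ → (Fin n → ℝ) → Fin n → ℝ)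
    (s : ℝ) (x : Fin n → ℝ) : Fin n → ℝ :=
  Fb s x (y s x) - dirDeriv (y s) x (ηb s x + y s x)

section Inviscid

variable {n : ℕ} {a b K M : ℝ} {ηb : ℝ → (Fin n → ℝ) → Fin n → ℝ}
  {Fb : ℝ → (Fin n → ℝ) → (Fin n → ℝ) → Fin n → ℝ} {h : (Fin n → ℝ) → Fin n → ℝ}
  {y : ℝ → (Fin n → ℝ) → Fin n → ℝ}

theorem continuousOn_inviscidRHS {S : Set ℝ}
    (hηc : ContinuousOn (fun p : ℝ × (Fin n → ℝ) => ηb p.1 p.2) (S ×ˢ univ))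
    (hFc : ContinuousOn (fun p : ℝ × (Fin n → ℝ) × (Fin n → ℝ) => Fb p.1 p.2.1 p.2.2)
      (S ×ˢ univ))
    (hyc : ContinuousOn (fun p : ℝ × (Fin n → ℝ) => y p.1 p.2) (S ×ˢ univ))
    (hyf : ContinuousOn (fun p : ℝ × (Fin n → ℝ) => fderiv ℝ (y p.1) p.2) (S ×ˢ univ))
    (x : Fin n → ℝ) : ContinuousOn (fun s => inviscidRHS ηb Fb y s x) S := by
  have hmaps : MapsTo (fun s => (s, x)) S (S ×ˢ univ) := fun s hs => ⟨hs, mem_univ _⟩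
  have hcurve : ContinuousOn (fun s => (s, x)) S := continuousOn_id.prodMk continuousOn_const
  have hyx : ContinuousOn (fun s => y s x) S := hyc.comp hcurve hmaps
  have hFx : ContinuousOn (fun s => Fb s x (y s x)) S :=
    hFc.comp (continuousOn_id.prodMk (continuousOn_const.prodMk hyx)) fun s hs => ⟨hs, mem_univ _⟩
  exact hFx.sub ((hyf.comp hcurve hmaps).clm_apply ((hηc.comp hcurve hmaps).add hyx))

theorem FBSol.snd_eq_apply_fst {x₀ : Fin n → ℝ} {X Y : ℝ → Fin n → ℝ}
    (hXY : FBSol b a ηb Fb h x₀ X Y)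
    (hηc : ContinuousOn (fun p : ℝ × (Fin n → ℝ) => ηb p.1 p.2) (Icc a b ×ˢ univ))
    (hFc : ContinuousOn (fun p : ℝ × (Fin n → ℝ) × (Fin n → ℝ) => Fb p.1 p.2.1 p.2.2)
      (Icc a b ×ˢ univ))
    (hFL : ∀ s ∈ Icc a b, ∀ x v v', ‖Fb s x v - Fb s x v'‖ ≤ K * ‖v - v'‖)
    (hyc : ContinuousOn (fun p : ℝ × (Fin n → ℝ) => y p.1 p.2) (Icc a b ×ˢ univ))
    (hyd : ∀ s ∈ Icc a b, Differentiable ℝ (y s))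
    (hyf : ContinuousOn (fun p : ℝ × (Fin n → ℝ) => fderiv ℝ (y p.1) p.2) (Icc a b ×ˢ univ))
    (hM : ∀ s ∈ Icc a b, ∀ x, ‖fderiv ℝ (y s) x‖ ≤ M)
    (heq : ∀ t ∈ Icc a b, ∀ x, y t x = h x + ∫ s in t..b, inviscidRHS ηb Fb y s x) :
    ∀ s ∈ Icc a b, Y s = y s (X s) := by
  obtain ⟨hXc, hYc, hXeq, hYeq⟩ := hXY
  have hmaps : MapsTo (fun s => (s, X s)) (Icc a b) (Icc a b ×ˢ univ) :=
    fun s hs => ⟨hs, mem_univ _⟩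
  have hX' : ∀ s ∈ Icc a b, HasDerivWithinAt X (-(ηb s (X s) + Y s)) (Icc a b) s := fun s hs =>
    ((hasDerivWithinAt_integral_Icc_right
      ((hηc.comp (continuousOn_id.prodMk hXc) hmaps).add hYc) hs).const_sub x₀).congr
      hXeq (hXeq s hs)
  have hY' : ∀ s ∈ Icc a b, HasDerivWithinAt Y (-Fb s (X s) (Y s)) (Icc a b) s := fun s hs =>
    ((hasDerivWithinAt_integral_Icc_left (hFc.comp (continuousOn_id.prodMk (hXc.prodMk hYc))
      fun s hs => ⟨hs, mem_univ _⟩) hs).const_add (h (X b))).congr hYeq (hYeq s hs)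
  have hy' : ∀ x, ∀ s ∈ Icc a b,
      HasDerivWithinAt (fun u => y u x) (-inviscidRHS ηb Fb y s x) (Icc a b) s := fun x s hs =>
    ((hasDerivWithinAt_integral_Icc_left (continuousOn_inviscidRHS hηc hFc hyc hyf x)
      hs).const_add (h x)).congr (fun u hu => heq u hu x) (heq s hs x)
  -- The transport terms `∇y(X)(η̄ + ·)` coming from `X'` and from the equation for `y` cancel.
  set z' := fun s => (Fb s (X s) (y s (X s)) - Fb s (X s) (Y s)) +
    fderiv ℝ (y s) (X s) (Y s - y s (X s)) with hz'_def
  have hz' : ∀ s ∈ Icc a b, HasDerivWithinAt (fun s => Y s - y s (X s)) (z' s) (Icc a b) s := by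
    intro s hs
    refine ((hY' s hs).sub (hasDerivWithinAt_apply_of_continuousWithinAt_fderiv hyd
      (hyf _ (hmaps hs)) (hX' s hs) (hy' (X s) s hs))).congr_deriv ?_
    simp only [hz'_def, inviscidRHS, dirDeriv, map_neg, map_add, map_sub]
    abel
  have hbound : ∀ s ∈ Icc a b, ‖z' s‖ ≤ (K + M) * ‖Y s - y s (X s)‖ := by
    intro s hs
    have hF := hFL s hs (X s) (y s (X s)) (Y s)
    have hD := (fderiv ℝ (y s) (X s)).le_opNorm (Y s - y s (X s))
    rw [norm_sub_rev (y s (X s))] at hF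
    calc ‖z' s‖
        ≤ ‖Fb s (X s) (y s (X s)) - Fb s (X s) (Y s)‖ +
          ‖fderiv ℝ (y s) (X s) (Y s - y s (X s))‖ := norm_add_le _ _
      _ ≤ K * ‖Y s - y s (X s)‖ + M * ‖Y s - y s (X s)‖ :=
          add_le_add hF (hD.trans (mul_le_mul_of_nonneg_right (hM s hs _) (norm_nonneg _)))
      _ = (K + M) * ‖Y s - y s (X s)‖ := by ring
  intro s hs
  have hab : b ∈ Icc a b := right_mem_Icc.2 (hs.1.trans hs.2)
  have hzb : Y b - y b (X b) = 0 := by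
    rw [hYeq b hab, heq b hab, integral_same, integral_same, sub_self]
  exact sub_eq_zero.1 (eq_zero_of_norm_deriv_le_mul_norm_of_eq_zero_at_right hz' hbound hzb s hs)

end Inviscid

theorem stmt_12_general {n : ℕ} (T K γ : ℝ)
    (ηb : ℝ → (Fin n → ℝ) → Fin n → ℝ)
    (Fb : ℝ → (Fin n → ℝ) → (Fin n → ℝ) → Fin n → ℝ)
    (h : (Fin n → ℝ) → Fin n → ℝ)
    (hηc : ContinuousOn (fun p : ℝ × (Fin n → ℝ) => ηb p.1 p.2)
      (Icc (0:ℝ) T ×ˢ (univ : Set (Fin n → ℝ))))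
    (hFc : ContinuousOn (fun p : ℝ × (Fin n → ℝ) × (Fin n → ℝ) => Fb p.1 p.2.1 p.2.2)
      (Icc (0:ℝ) T ×ˢ (univ : Set ((Fin n → ℝ) × (Fin n → ℝ)))))
    (hFL : ∀ t ∈ Icc (0:ℝ) T, ∀ x x' v v',
      ‖Fb t x v - Fb t x' v'‖ ≤ K * (‖x - x'‖ + ‖v - v'‖))
    -- `γ` is such that the forward–backward system is uniquely solvable on every
    -- interval `[τ',T]` of length at most `γ`, from every initial point:
    (hwp : ∀ τ' : ℝ, 0 ≤ τ' → τ' ≤ T → T - τ' ≤ γ → ∀ x : Fin n → ℝ,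
      ∃ X Y : ℝ → Fin n → ℝ, FBSol T τ' ηb Fb h x X Y ∧
        ∀ X' Y' : ℝ → Fin n → ℝ, FBSol T τ' ηb Fb h x X' Y' →
          ∀ t ∈ Icc τ' T, X' t = X t ∧ Y' t = Y t)
    (τ : ℝ) (hτ0 : 0 ≤ τ) (hτγ : T - τ ≤ γ)
    (y₁ y₂ : ℝ → (Fin n → ℝ) → Fin n → ℝ)
    (hy₁ : C11On τ T y₁) (hy₂ : C11On τ T y₂)
    (hy₁b : ∃ M : ℝ, ∀ t ∈ Icc τ T, ∀ x, ‖fderiv ℝ (y₁ t) x‖ ≤ M)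
    (hy₂b : ∃ M : ℝ, ∀ t ∈ Icc τ T, ∀ x, ‖fderiv ℝ (y₂ t) x‖ ≤ M)
    (heq₁ : ∀ t ∈ Icc τ T, ∀ x, y₁ t x = h x +
      ∫ s in t..T, (Fb s x (y₁ s x) - dirDeriv (y₁ s) x (ηb s x + y₁ s x)))
    (heq₂ : ∀ t ∈ Icc τ T, ∀ x, y₂ t x = h x +
      ∫ s in t..T, (Fb s x (y₂ s x) - dirDeriv (y₂ s) x (ηb s x + y₂ s x))) :
    ∀ t ∈ Icc τ T, ∀ x, y₁ t x = y₂ t x := by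
  intro t ht x
  obtain ⟨X, Y, hXY, -⟩ := hwp t (hτ0.trans ht.1) ht.2 ((sub_le_sub_left ht.1 T).trans hτγ) x
  have ht' : t ∈ Icc t T := left_mem_Icc.2 ht.2
  have hX : X t = x := by simpa using hXY.2.2.1 t ht'
  have hsub : Icc t T ⊆ Icc τ T := Icc_subset_Icc_left ht.1
  have hsub₀ : Icc t T ⊆ Icc 0 T := Icc_subset_Icc_left (hτ0.trans ht.1)
  have hY_eq : ∀ y, C11On τ T y → (∃ M : ℝ, ∀ s ∈ Icc τ T, ∀ x, ‖fderiv ℝ (y s) x‖ ≤ M) →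
      (∀ s ∈ Icc τ T, ∀ x, y s x = h x + ∫ r in s..T, inviscidRHS ηb Fb y r x) →
      y t x = Y t := by
    rintro y ⟨hyc, hyd, -, -, hyf⟩ ⟨M, hM⟩ heq
    rw [← hX, hXY.snd_eq_apply_fst (hηc.mono (prod_mono hsub₀ subset_rfl))
      (hFc.mono (prod_mono hsub₀ subset_rfl))
      (fun s hs x v v' => by simpa using hFL s (hsub₀ hs) x x v v')
      (hyc.mono (prod_mono hsub subset_rfl)) (fun s hs => hyd s (hsub hs))
      (hyf.mono (prod_mono hsub subset_rfl)) (fun s hs => hM s (hsub hs))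
      (fun s hs => heq s (hsub hs)) t ht']
  rw [hY_eq y₁ hy₁ hy₁b heq₁, hY_eq y₂ hy₂ hy₂b heq₂]

/-- Uniqueness of `C¹` solutions (with bounded spatial derivatives) of the backward
inviscid equation on a short interval on which the forward–backward system is
uniquely solvable. -/
theorem stmt_12 {n : ℕ} (hn : 1 ≤ n) (T K γ : ℝ) (hT : 0 < T) (hK : 0 < K)
    (hγ : 0 < γ)
    (ηb : ℝ → (Fin n → ℝ) → Fin n → ℝ)
    (Fb : ℝ → (Fin n → ℝ) → (Fin n → ℝ) → Fin n → ℝ)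
    (h : (Fin n → ℝ) → Fin n → ℝ)
    (hηc : ContinuousOn (fun p : ℝ × (Fin n → ℝ) => ηb p.1 p.2)
      (Icc (0:ℝ) T ×ˢ (univ : Set (Fin n → ℝ))))
    (hFc : ContinuousOn (fun p : ℝ × (Fin n → ℝ) × (Fin n → ℝ) => Fb p.1 p.2.1 p.2.2)
      (Icc (0:ℝ) T ×ˢ (univ : Set ((Fin n → ℝ) × (Fin n → ℝ)))))
    (hhc : Continuous h)
    (hηL : ∀ t ∈ Icc (0:ℝ) T, ∀ x x', ‖ηb t x - ηb t x'‖ ≤ K * ‖x - x'‖)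
    (hhL : ∀ x x', ‖h x - h x'‖ ≤ K * ‖x - x'‖)
    (hFL : ∀ t ∈ Icc (0:ℝ) T, ∀ x x' v v',
      ‖Fb t x v - Fb t x' v'‖ ≤ K * (‖x - x'‖ + ‖v - v'‖))
    -- `γ` is such that the forward–backward system is uniquely solvable on every
    -- interval `[τ',T]` of length at most `γ`, from every initial point:
    (hwp : ∀ τ' : ℝ, 0 ≤ τ' → τ' ≤ T → T - τ' ≤ γ → ∀ x : Fin n → ℝ,
      ∃ X Y : ℝ → Fin n → ℝ, FBSol T τ' ηb Fb h x X Y ∧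
        ∀ X' Y' : ℝ → Fin n → ℝ, FBSol T τ' ηb Fb h x X' Y' →
          ∀ t ∈ Icc τ' T, X' t = X t ∧ Y' t = Y t)
    (τ : ℝ) (hτ0 : 0 ≤ τ) (hτT : τ ≤ T) (hτγ : T - τ ≤ γ)
    (y₁ y₂ : ℝ → (Fin n → ℝ) → Fin n → ℝ)
    (hy₁ : C11On τ T y₁) (hy₂ : C11On τ T y₂)
    (hy₁b : ∃ M : ℝ, ∀ t ∈ Icc τ T, ∀ x, ‖fderiv ℝ (y₁ t) x‖ ≤ M)
    (hy₂b : ∃ M : ℝ, ∀ t ∈ Icc τ T, ∀ x, ‖fderiv ℝ (y₂ t) x‖ ≤ M)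
    (heq₁ : ∀ t ∈ Icc τ T, ∀ x, y₁ t x = h x +
      ∫ s in t..T, (Fb s x (y₁ s x) - dirDeriv (y₁ s) x (ηb s x + y₁ s x)))
    (heq₂ : ∀ t ∈ Icc τ T, ∀ x, y₂ t x = h x +
      ∫ s in t..T, (Fb s x (y₂ s x) - dirDeriv (y₂ s) x (ηb s x + y₂ s x))) :
    ∀ t ∈ Icc τ T, ∀ x, y₁ t x = y₂ t x :=
  stmt_12_general T K γ ηb Fb h hηc hFc hFL hwp τ hτ0 hτγ y₁ y₂ hy₁ hy₂ hy₁b hy₂b heq₁ heq₂
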